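/- arXiv:1509.03818 — 4 statements merged into one kernel-verified Lean document; each statement's English description precedes it below -/
import Mathlib

section
/- If a family S of matrix-valued signals is shift-invariant and satisfies the fatness condition A3 with respect to a concatenable subfamily F, then ρ(S) = μ(F), where μ(F) := limsup_{t→∞} sup{‖R‖^{1/t} : R ∈ Φ(F_t)}. -/
/-!
Repeating a block `A ∈ F_t` periodically gives an infinite concatenation, hence a signal of `S`
whose flow on `[0, t]` is that of `A`; so `μ(F) ≤ ρ(S)`. Conversely, fatness factors
`Φ_A(t,0) = (Φ_A(t,0) K R⁻¹) R K⁻¹` with `‖Φ_A(t,0) K R⁻¹‖ ≤ C`, `‖K⁻¹‖` bounded on the compact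
set `𝒦` and `R ∈ Φ(F_{t̂})`, `t ≤ t̂ ≤ t + Δ`. For `a > μ(F)` eventually `‖R‖ ≤ a^{t̂}`, so
`‖Φ_A(t,0)‖ ≤ const · a^t`, and the constant disappears under `(·)^{1/t}`; so `ρ(S) ≤ μ(F)`.
-/

open Filter Set
open scoped ENNReal Topology

noncomputable section

abbrev Euc (n : ℕ) := EuclideanSpace ℝ (Fin n)
abbrev Mat (n : ℕ) := Euc n →L[ℝ] Euc n

/-- The set `F_∞` of infinite concatenations `A₁∗A₂∗⋯` of signals `A_k ∈ F_{t_k}` with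
`Σ t_k = ∞`. -/
def InftyConcat {n : ℕ} (F : ℝ → Set (ℝ → Mat n)) : Set (ℝ → Mat n) :=
  {A | ∃ (t : ℕ → ℝ) (B : ℕ → ℝ → Mat n),
    (∀ k, 0 ≤ t k) ∧ (∀ k, B k ∈ F (t k)) ∧
    Tendsto (fun k => ∑ i ∈ Finset.range k, t i) atTop atTop ∧
    ∀ k, ∀ u ∈ Ico (∑ i ∈ Finset.range k, t i) (∑ i ∈ Finset.range (k + 1), t i),
      A u = B k (u - ∑ i ∈ Finset.range k, t i)}

/-- The set of flows at time `t` : `Φ(F_t) = {Φ_A(t,0) : A ∈ F_t}`. -/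
def PhiF {n : ℕ} (F : ℝ → Set (ℝ → Mat n)) (Φ : (ℝ → Mat n) → ℝ → ℝ → Mat n)
    (t : ℝ) : Set (Mat n) :=
  {R | ∃ A ∈ F t, R = Φ A t 0}

section GrowthRate

variable {α E : Type*} [SeminormedAddGroup E]

def growthRate (X : ℝ → Set α) (g : ℝ → α → E) : ℝ≥0∞ :=
  limsup (fun t => ⨆ x ∈ X t, ENNReal.ofReal (‖g t x‖ ^ (1 / t))) atTop

theorem growthRate_le_of_eventually_norm_le {X : ℝ → Set α} {g : ℝ → α → E} {a : ℝ}
    (ha : 0 ≤ a) (E₀ : ℝ) (h : ∀ᶠ t in atTop, ∀ x ∈ X t, ‖g t x‖ ≤ E₀ * a ^ t) :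
    growthRate X g ≤ ENNReal.ofReal a := by
  set E₁ := max E₀ 1
  have hE₁ : 0 < E₁ := lt_of_lt_of_le one_pos (le_max_right _ _)
  have hbound : ∀ᶠ t in atTop,
      ⨆ x ∈ X t, ENNReal.ofReal (‖g t x‖ ^ (1 / t)) ≤ ENNReal.ofReal (E₁ ^ (1 / t) * a) := by
    filter_upwards [h, eventually_gt_atTop 0] with t ht htpos
    refine iSup₂_le fun x hx => ENNReal.ofReal_le_ofReal ?_
    have hat : 0 ≤ a ^ t := Real.rpow_nonneg ha t
    calc ‖g t x‖ ^ (1 / t) ≤ (E₁ * a ^ t) ^ (1 / t) :=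
          Real.rpow_le_rpow (norm_nonneg _)
            ((ht x hx).trans (mul_le_mul_of_nonneg_right (le_max_left _ _) hat)) (by positivity)
      _ = E₁ ^ (1 / t) * a := by
          rw [Real.mul_rpow hE₁.le hat, ← Real.rpow_mul ha, mul_one_div_cancel htpos.ne',
            Real.rpow_one]
  have hlim : Tendsto (fun t : ℝ => ENNReal.ofReal (E₁ ^ (1 / t) * a)) atTop
      (𝓝 (ENNReal.ofReal a)) := by
    have hinv : Tendsto (fun t : ℝ => 1 / t) atTop (𝓝 0) := by
      simpa only [one_div] using tendsto_inv_atTop_zero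
    have hroot := (tendsto_const_nhds (x := E₁)).rpow hinv (Or.inl hE₁.ne')
    rw [Real.rpow_zero] at hroot
    simpa only [one_mul] using ENNReal.tendsto_ofReal (hroot.mul_const a)
  exact (limsup_le_limsup hbound).trans hlim.limsup_eq.le

theorem eventually_norm_le_of_growthRate_lt {X : ℝ → Set α} {g : ℝ → α → E} {a : ℝ}
    (h : growthRate X g < ENNReal.ofReal a) :
    ∀ᶠ t in atTop, ∀ x ∈ X t, ‖g t x‖ ≤ a ^ t := by
  filter_upwards [eventually_lt_of_limsup_lt h, eventually_gt_atTop 0] with t ht htpos x hx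
  have hlt : ENNReal.ofReal (‖g t x‖ ^ (1 / t)) < ENNReal.ofReal a :=
    (le_biSup (fun x => ENNReal.ofReal (‖g t x‖ ^ (1 / t))) hx).trans_lt ht
  obtain ⟨hroot, ha⟩ := ENNReal.ofReal_lt_ofReal_iff'.1 hlt
  rw [one_div, Real.rpow_inv_lt_iff_of_pos (norm_nonneg _) ha.le htpos] at hroot
  exact hroot.le

end GrowthRate

theorem rpow_le_max_one_rpow_mul_rpow {a t s Δ : ℝ} (ha : 0 < a) (hts : t ≤ s)
    (hs : s ≤ t + Δ) : a ^ s ≤ max 1 (a ^ Δ) * a ^ t := by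
  have hshift : a ^ (s - t) ≤ max 1 (a ^ Δ) := by
    rcases le_total 1 a with h1 | h1
    · exact (Real.rpow_le_rpow_of_exponent_le h1 (by linarith)).trans (le_max_right _ _)
    · exact (Real.rpow_le_one ha.le h1 (by linarith)).trans (le_max_left _ _)
  calc a ^ s = a ^ (s - t) * a ^ t := by rw [← Real.rpow_add ha, sub_add_cancel]
    _ ≤ max 1 (a ^ Δ) * a ^ t := mul_le_mul_of_nonneg_right hshift (Real.rpow_nonneg ha.le t)

theorem norm_le_norm_mul_units_mul {R : Type*} [SeminormedRing R] (x : R) (K U : Rˣ) :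
    ‖x‖ ≤ ‖x * ↑(K * U⁻¹)‖ * ‖(U : R)‖ * ‖((K⁻¹ : Rˣ) : R)‖ := by
  have hx : x = x * ↑(K * U⁻¹) * U * ↑K⁻¹ := by
    simp only [Units.val_mul, mul_assoc, Units.inv_mul_cancel_left, Units.mul_inv, mul_one]
  calc ‖x‖ = ‖x * ↑(K * U⁻¹) * U * ↑K⁻¹‖ := congrArg norm hx
    _ ≤ ‖x * ↑(K * U⁻¹)‖ * ‖(U : R)‖ * ‖((K⁻¹ : Rˣ) : R)‖ :=
      (norm_mul_le _ _).trans (mul_le_mul_of_nonneg_right (norm_mul_le _ _) (norm_nonneg _))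

theorem IsCompact.exists_forall_norm_inv_le {R : Type*} [NormedRing R] {𝒦 : Set Rˣ}
    (h𝒦 : IsCompact 𝒦) : ∃ M, ∀ K ∈ 𝒦, ‖((K⁻¹ : Rˣ) : R)‖ ≤ M := by
  simpa only [norm_norm] using
    h𝒦.exists_bound_of_continuousOn Units.continuous_coe_inv.norm.continuousOn

section Signals

variable {n : ℕ}

theorem periodic_mem_inftyConcat {F : ℝ → Set (ℝ → Mat n)} {t : ℝ} (ht : 0 < t)
    {A : ℝ → Mat n} (hA : A ∈ F t) : (fun u => A (toIcoMod ht 0 u)) ∈ InftyConcat F := by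
  refine ⟨fun _ => t, fun _ => A, fun _ => ht.le, fun _ => hA, ?_, fun k u hu => ?_⟩
  · simp only [Finset.sum_const, Finset.card_range, nsmul_eq_mul]
    exact tendsto_natCast_atTop_atTop.atTop_mul_const ht
  · simp only [Finset.sum_const, Finset.card_range, nsmul_eq_mul, Nat.cast_succ] at hu ⊢
    refine congrArg A ((toIcoMod_eq_iff ht).2 ⟨⟨by linarith [hu.1], by linarith [hu.2]⟩, k, ?_⟩)
    simp only [zsmul_eq_mul, Int.cast_natCast]
    ring

theorem phiF_subset_flow_image {S : Set (ℝ → Mat n)} {F : ℝ → Set (ℝ → Mat n)}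
    {Φ : (ℝ → Mat n) → ℝ → ℝ → Mat n}
    (hΦloc : ∀ A B s t, s ≤ t → (∀ u ∈ Ico s t, A u = B u) → Φ A t s = Φ B t s)
    (hsub : InftyConcat F ⊆ S) {t : ℝ} (ht : 0 < t) :
    PhiF F Φ t ⊆ (fun A => Φ A t 0) '' S := by
  rintro _ ⟨A, hA, rfl⟩
  refine ⟨_, hsub (periodic_mem_inftyConcat ht hA), hΦloc _ _ 0 t ht.le fun u hu => ?_⟩
  rw [(toIcoMod_eq_self ht).2 (by rwa [zero_add])]

theorem growthRate_phiF_le {S : Set (ℝ → Mat n)} {F : ℝ → Set (ℝ → Mat n)}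
    {Φ : (ℝ → Mat n) → ℝ → ℝ → Mat n}
    (hΦloc : ∀ A B s t, s ≤ t → (∀ u ∈ Ico s t, A u = B u) → Φ A t s = Φ B t s)
    (hsub : InftyConcat F ⊆ S) :
    growthRate (PhiF F Φ) (fun _ R => R) ≤ growthRate (fun _ => S) (fun t A => Φ A t 0) := by
  refine limsup_le_limsup ?_
  filter_upwards [eventually_gt_atTop 0] with t ht
  refine iSup₂_le fun R hR => ?_
  obtain ⟨A, hA, rfl⟩ := phiF_subset_flow_image hΦloc hsub ht hR
  exact le_biSup (fun A => ENNReal.ofReal (‖Φ A t 0‖ ^ (1 / t))) hA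

theorem growthRate_le_of_fat {S : Set (ℝ → Mat n)} {F : ℝ → Set (ℝ → Mat n)}
    {Φ : (ℝ → Mat n) → ℝ → ℝ → Mat n} {C Δ : ℝ} {𝒦 : Set (Mat n)ˣ} (h𝒦 : IsCompact 𝒦)
    (hfat : ∀ t : ℝ, 0 ≤ t → ∀ A ∈ S, ∃ K ∈ 𝒦, ∃ th ∈ Icc t (t + Δ),
      ∃ Ru : (Mat n)ˣ, (Ru : Mat n) ∈ PhiF F Φ th ∧
        ‖Φ A t 0 ∘L ((K * Ru⁻¹ : (Mat n)ˣ) : Mat n)‖ ≤ C) :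
    growthRate (fun _ => S) (fun t A => Φ A t 0) ≤ growthRate (PhiF F Φ) (fun _ R => R) := by
  obtain ⟨M, hM⟩ := h𝒦.exists_forall_norm_inv_le
  refine le_of_forall_gt_imp_ge_of_dense fun c hc => ?_
  rcases eq_top_or_lt_top c with rfl | hc_top
  · exact le_top
  rw [← ENNReal.ofReal_toReal hc_top.ne] at hc ⊢
  set a := c.toReal
  have ha : 0 < a := ENNReal.ofReal_pos.1 (hc.trans_le' bot_le)
  obtain ⟨T, hT⟩ := eventually_atTop.1 (eventually_norm_le_of_growthRate_lt hc)
  refine growthRate_le_of_eventually_norm_le ha.le (C * max 1 (a ^ Δ) * M) ?_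
  filter_upwards [eventually_ge_atTop (max T 0)] with t ht A hA
  obtain ⟨K, hK, th, hth, Ru, hRu, hle⟩ := hfat t (le_of_max_le_right ht) A hA
  have hC : 0 ≤ C := (norm_nonneg _).trans hle
  have hM0 : 0 ≤ M := (norm_nonneg _).trans (hM K hK)
  calc ‖Φ A t 0‖ ≤ ‖Φ A t 0 * ↑(K * Ru⁻¹)‖ * ‖(Ru : Mat n)‖ * ‖((K⁻¹ : (Mat n)ˣ) : Mat n)‖ :=
        norm_le_norm_mul_units_mul _ K Ru
    _ ≤ C * a ^ th * M := by
        gcongr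
        exacts [hle, hT th ((le_of_max_le_left ht).trans hth.1) _ hRu, hM K hK]
    _ ≤ C * (max 1 (a ^ Δ) * a ^ t) * M := by
        gcongr
        exact rpow_le_max_one_rpow_mul_rpow ha hth.1 hth.2
    _ = C * max 1 (a ^ Δ) * M * a ^ t := by ring

end Signals

theorem stmt4_general (n : ℕ) (S : Set (ℝ → Mat n)) (F : ℝ → Set (ℝ → Mat n))
    (Φ : (ℝ → Mat n) → ℝ → ℝ → Mat n)
    -- axioms of fundamental matrices
    (hΦloc : ∀ A B s t, s ≤ t → (∀ u ∈ Ico s t, A u = B u) → Φ A t s = Φ B t s)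
    -- (A3) fatness
    (hsub : InftyConcat F ⊆ S)
    (C Δ : ℝ)
    (𝒦 : Set (Mat n)ˣ) (h𝒦 : IsCompact 𝒦)
    (hfat : ∀ t : ℝ, 0 ≤ t → ∀ A ∈ S, ∃ K ∈ 𝒦, ∃ th ∈ Icc t (t + Δ),
      ∃ Ru : (Mat n)ˣ, (Ru : Mat n) ∈ PhiF F Φ th ∧
        ‖Φ A t 0 ∘L ((K * Ru⁻¹ : (Mat n)ˣ) : Mat n)‖ ≤ C) :
    Filter.limsup (fun t : ℝ => ⨆ A ∈ S, ENNReal.ofReal (‖Φ A t 0‖ ^ (1 / t))) atTop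
      = Filter.limsup
          (fun t : ℝ => ⨆ R ∈ PhiF F Φ t, ENNReal.ofReal (‖R‖ ^ (1 / t))) atTop :=
  le_antisymm (growthRate_le_of_fat h𝒦 hfat) (growthRate_phiF_le hΦloc hsub)

/-- If the family `S` of signals is shift-invariant (A0) and satisfies the
fatness condition (A3) with respect to a concatenable subfamily `F` (with `F_∞ ⊆ S`), then the
generalized spectral radius of `S` coincides with
`μ(F) = limsup_{t→∞} sup {‖R‖^{1/t} : R ∈ Φ(F_t)}`.  The flow `Φ A t s` is axiomatized by
its identity, cocycle, locality and shift properties. -/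
theorem stmt4 (n : ℕ) (S : Set (ℝ → Mat n)) (F : ℝ → Set (ℝ → Mat n))
    (Φ : (ℝ → Mat n) → ℝ → ℝ → Mat n)
    -- axioms of fundamental matrices
    (hΦid : ∀ A s, Φ A s s = 1)
    (hΦcoc : ∀ A s u t, s ≤ u → u ≤ t → Φ A t u ∘L Φ A u s = Φ A t s)
    (hΦloc : ∀ A B s t, s ≤ t → (∀ u ∈ Ico s t, A u = B u) → Φ A t s = Φ B t s)
    (hΦshift : ∀ A (r s t : ℝ), Φ (fun u => A (r + u)) t s = Φ A (r + t) (r + s))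
    -- (A0) shift-invariance of S
    (hA0 : ∀ A ∈ S, ∀ r : ℝ, 0 ≤ r → (fun u => A (r + u)) ∈ S)
    -- (A3) fatness
    (hsub : InftyConcat F ⊆ S)
    (C Δ : ℝ) (hC : 0 ≤ C) (hΔ : 0 ≤ Δ)
    (𝒦 : Set (Mat n)ˣ) (h𝒦 : IsCompact 𝒦)
    (hfat : ∀ t : ℝ, 0 ≤ t → ∀ A ∈ S, ∃ K ∈ 𝒦, ∃ th ∈ Icc t (t + Δ),
      ∃ Ru : (Mat n)ˣ, (Ru : Mat n) ∈ PhiF F Φ th ∧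
        ‖Φ A t 0 ∘L ((K * Ru⁻¹ : (Mat n)ˣ) : Mat n)‖ ≤ C)
    (hfatId : ∀ t : ℝ, 0 ≤ t → ∀ A ∈ InftyConcat F, ∃ th ∈ Icc t (t + Δ),
      ∃ Ru : (Mat n)ˣ, (Ru : Mat n) ∈ PhiF F Φ th ∧
        ‖Φ A t 0 ∘L ((Ru⁻¹ : (Mat n)ˣ) : Mat n)‖ ≤ C) :
    Filter.limsup (fun t : ℝ => ⨆ A ∈ S, ENNReal.ofReal (‖Φ A t 0‖ ^ (1 / t))) atTop
      = Filter.limsup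
          (fun t : ℝ => ⨆ R ∈ PhiF F Φ t, ENNReal.ofReal (‖R‖ ^ (1 / t))) atTop :=
  stmt4_general n S F Φ hΦloc hsub C Δ 𝒦 h𝒦 hfat
end
end

section
/- Define R_∞ as the set of limits of sequences μ^{-t_k} R_k with R_k ∈ Φ(F_{t_k}) and t_k → ∞, where μ = μ(F) > 0. If Φ(F) is a quasi-extremal semigroup (‖R‖ ≤ C_qe μ^t for R ∈ Φ(F_t)), then R_∞ is a compact multiplicative semigroup, and for every t ≥ 0, T ∈ Φ(F_t) and S ∈ R_∞, both μ^{-t}TS and μ^{-t}ST belong to R_∞. -/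
open Filter Set
open scoped Topology Pointwise

noncomputable section

/-!
Normalised by `μ^{-t}`, every element of `P t` has norm at most `C_qe`, so all limits lie in a
closed ball; the set of limits is closed by a diagonal argument, hence compact in finite
dimension. Since `μ^{-(s+t)} Q R = (μ^{-s} Q)(μ^{-t} R)` and `P s · P t ⊆ P (s + t)`, products
of normalised sequences are again normalised sequences, which gives both the semigroup and the
ideal property (for the latter, pair a sequence with the constant sequence `T ∈ P t`).
-/

/-- The paper's `R_∞`. -/
def scaledLimits {E : Type*} [TopologicalSpace E] [SMul ℝ E] (P : ℝ → Set E) (μ : ℝ) :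
    Set E :=
  {R | ∃ (tk : ℕ → ℝ) (Rk : ℕ → E), (∀ k, 0 ≤ tk k ∧ Rk k ∈ P (tk k)) ∧
    Tendsto tk atTop atTop ∧ Tendsto (fun k => (μ ^ tk k)⁻¹ • Rk k) atTop (𝓝 R)}

section Topology

variable {E : Type*} {P : ℝ → Set E} {μ : ℝ}

theorem scaledLimits_eq_iInter_closure [PseudoMetricSpace E] [SMul ℝ E] :
    scaledLimits P μ = ⋂ N : ℕ, closure (⋃ t ≥ (N : ℝ), (μ ^ t)⁻¹ • P t) := by
  ext R
  simp only [mem_iInter]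
  constructor
  · rintro ⟨tk, Rk, hk, htk, hlim⟩ N
    refine mem_closure_of_tendsto hlim ?_
    filter_upwards [htk.eventually_ge_atTop (N : ℝ)] with k hkN
    exact mem_biUnion hkN (smul_mem_smul_set (hk k).2)
  · intro hR
    have hnear : ∀ k : ℕ, ∃ X ∈ ⋃ t ≥ (k : ℝ), (μ ^ t)⁻¹ • P t, dist R X < 1 / (k + 1) :=
      fun k => Metric.mem_closure_iff.1 (hR k) _ Nat.one_div_pos_of_nat
    choose X hX hdist using hnear
    simp only [mem_iUnion, mem_smul_set] at hX
    choose tk htk Rk hRk hXeq using hX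
    refine ⟨tk, Rk, fun k => ⟨(Nat.cast_nonneg k).trans (htk k), hRk k⟩,
      tendsto_atTop_mono htk tendsto_natCast_atTop_atTop, ?_⟩
    simp only [hXeq]
    rw [tendsto_iff_dist_tendsto_zero]
    exact squeeze_zero (fun _ => dist_nonneg) (fun k => (dist_comm (X k) R ▸ (hdist k).le))
      tendsto_one_div_add_atTop_nhds_zero_nat

theorem isClosed_scaledLimits [PseudoMetricSpace E] [SMul ℝ E] :
    IsClosed (scaledLimits P μ) := by
  rw [scaledLimits_eq_iInter_closure]
  exact isClosed_iInter fun _ => isClosed_closure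

variable [SeminormedAddCommGroup E] [NormedSpace ℝ E] {C : ℝ}

theorem norm_le_of_mem_scaledLimits (hμ : 0 < μ)
    (hqe : ∀ t : ℝ, 0 ≤ t → ∀ R ∈ P t, ‖R‖ ≤ C * μ ^ t) {R : E}
    (hR : R ∈ scaledLimits P μ) : ‖R‖ ≤ C := by
  obtain ⟨tk, Rk, hk, -, hlim⟩ := hR
  refine le_of_tendsto hlim.norm (Eventually.of_forall fun k => ?_)
  have hμt : 0 < μ ^ tk k := Real.rpow_pos_of_pos hμ _
  rw [norm_smul, norm_inv, Real.norm_of_nonneg hμt.le, inv_mul_le_iff₀ hμt, mul_comm]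
  exact hqe _ (hk k).1 _ (hk k).2

theorem isCompact_scaledLimits [ProperSpace E] (hμ : 0 < μ)
    (hqe : ∀ t : ℝ, 0 ≤ t → ∀ R ∈ P t, ‖R‖ ≤ C * μ ^ t) :
    IsCompact (scaledLimits P μ) :=
  Metric.isCompact_of_isClosed_isBounded isClosed_scaledLimits <|
    (Metric.isBounded_closedBall (x := 0) (r := C)).subset fun _ hR =>
      mem_closedBall_zero_iff.2 (norm_le_of_mem_scaledLimits hμ hqe hR)

end Topology

section Algebra

variable {A : Type*} [SeminormedRing A] [NormedAlgebra ℝ A] {P : ℝ → Set A} {μ : ℝ}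

/-- Only the total times need to tend to infinity, so one factor may be a constant sequence. -/
theorem mul_mem_scaledLimits_of_tendsto (hμ : 0 < μ)
    (hconc : ∀ s t : ℝ, 0 ≤ s → 0 ≤ t → ∀ R ∈ P s, ∀ Q ∈ P t, Q * R ∈ P (s + t))
    {sQ sR : ℕ → ℝ} {Q R : ℕ → A} {q r : A}
    (hQ : ∀ k, 0 ≤ sQ k ∧ Q k ∈ P (sQ k)) (hR : ∀ k, 0 ≤ sR k ∧ R k ∈ P (sR k))
    (hs : Tendsto (fun k => sR k + sQ k) atTop atTop)
    (hQq : Tendsto (fun k => (μ ^ sQ k)⁻¹ • Q k) atTop (𝓝 q))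
    (hRr : Tendsto (fun k => (μ ^ sR k)⁻¹ • R k) atTop (𝓝 r)) :
    q * r ∈ scaledLimits P μ := by
  refine ⟨fun k => sR k + sQ k, fun k => Q k * R k,
    fun k => ⟨add_nonneg (hR k).1 (hQ k).1, hconc _ _ (hR k).1 (hQ k).1 _ (hR k).2 _ (hQ k).2⟩,
    hs, ?_⟩
  have hsplit : ∀ k, (μ ^ (sR k + sQ k))⁻¹ • (Q k * R k)
      = ((μ ^ sQ k)⁻¹ • Q k) * ((μ ^ sR k)⁻¹ • R k) := fun k => by
    rw [smul_mul_smul_comm, Real.rpow_add hμ, mul_inv, mul_comm]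
  simpa only [hsplit] using hQq.mul hRr

variable (hμ : 0 < μ)
  (hconc : ∀ s t : ℝ, 0 ≤ s → 0 ≤ t → ∀ R ∈ P s, ∀ Q ∈ P t, Q * R ∈ P (s + t))
include hμ hconc

theorem mul_mem_scaledLimits {Q R : A} (hQ : Q ∈ scaledLimits P μ)
    (hR : R ∈ scaledLimits P μ) : Q * R ∈ scaledLimits P μ := by
  obtain ⟨sQ, Qk, hQk, hsQ, hQq⟩ := hQ
  obtain ⟨sR, Rk, hRk, hsR, hRr⟩ := hR
  exact mul_mem_scaledLimits_of_tendsto hμ hconc hQk hRk (hsR.atTop_add_atTop hsQ) hQq hRr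

theorem inv_rpow_smul_mul_mem_scaledLimits_left {t : ℝ} (ht : 0 ≤ t) {T Q : A} (hT : T ∈ P t)
    (hQ : Q ∈ scaledLimits P μ) : (μ ^ t)⁻¹ • (T * Q) ∈ scaledLimits P μ := by
  obtain ⟨s, Qk, hQk, hs, hQq⟩ := hQ
  rw [← smul_mul_assoc]
  exact mul_mem_scaledLimits_of_tendsto hμ hconc (fun _ => ⟨ht, hT⟩) hQk
    (tendsto_atTop_add_const_right _ t hs) tendsto_const_nhds hQq

theorem inv_rpow_smul_mul_mem_scaledLimits_right {t : ℝ} (ht : 0 ≤ t) {T Q : A} (hT : T ∈ P t)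
    (hQ : Q ∈ scaledLimits P μ) : (μ ^ t)⁻¹ • (Q * T) ∈ scaledLimits P μ := by
  obtain ⟨s, Qk, hQk, hs, hQq⟩ := hQ
  rw [← mul_smul_comm]
  exact mul_mem_scaledLimits_of_tendsto hμ hconc hQk (fun _ => ⟨ht, hT⟩)
    (tendsto_atTop_add_const_left _ t hs) hQq tendsto_const_nhds

end Algebra

theorem stmt7_general (n : ℕ) (P : ℝ → Set (Mat n)) (μ Cqe : ℝ) (hμ : 0 < μ)
    (hconc : ∀ s t : ℝ, 0 ≤ s → 0 ≤ t → ∀ R ∈ P s, ∀ Q ∈ P t, Q ∘L R ∈ P (s + t))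
    (hqe : ∀ t : ℝ, 0 ≤ t → ∀ R ∈ P t, ‖R‖ ≤ Cqe * μ ^ t) :
    let Rinf : Set (Mat n) := {R | ∃ (tk : ℕ → ℝ) (Rk : ℕ → Mat n),
      (∀ k, 0 ≤ tk k ∧ Rk k ∈ P (tk k)) ∧ Tendsto tk atTop atTop ∧
      Tendsto (fun k => (μ ^ tk k)⁻¹ • Rk k) atTop (nhds R)}
    IsCompact Rinf ∧
    (∀ R ∈ Rinf, ∀ Q ∈ Rinf, Q ∘L R ∈ Rinf) ∧
    (∀ t : ℝ, 0 ≤ t → ∀ T ∈ P t, ∀ Q ∈ Rinf,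
      (μ ^ t)⁻¹ • (T ∘L Q) ∈ Rinf ∧ (μ ^ t)⁻¹ • (Q ∘L T) ∈ Rinf) :=
  ⟨isCompact_scaledLimits (P := P) hμ hqe,
    fun _ hR _ hQ => mul_mem_scaledLimits hμ hconc hQ hR,
    fun _ ht _ hT _ hQ => ⟨inv_rpow_smul_mul_mem_scaledLimits_left hμ hconc ht hT hQ,
      inv_rpow_smul_mul_mem_scaledLimits_right hμ hconc ht hT hQ⟩⟩

/-- Let `R_∞` be the set of limits of sequences `μ^{-t_k} R_k` with
`R_k ∈ P t_k = Φ(F_{t_k})` and `t_k → ∞`.  If the family `P` is concatenable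
(`P s · P t ⊆ P (s+t)`) and quasi-extremal (`‖R‖ ≤ C_qe μ^t` on `P t`), then `R_∞` is a
compact multiplicative semigroup and for every `t ≥ 0`, `T ∈ P t` and `S ∈ R_∞`, both
`μ^{-t} T S` and `μ^{-t} S T` belong to `R_∞`. -/
theorem stmt7 (n : ℕ) (P : ℝ → Set (Mat n)) (μ Cqe : ℝ) (hμ : 0 < μ) (hCqe : 0 < Cqe)
    (hconc : ∀ s t : ℝ, 0 ≤ s → 0 ≤ t → ∀ R ∈ P s, ∀ Q ∈ P t, Q ∘L R ∈ P (s + t))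
    (hqe : ∀ t : ℝ, 0 ≤ t → ∀ R ∈ P t, ‖R‖ ≤ Cqe * μ ^ t) :
    let Rinf : Set (Mat n) := {R | ∃ (tk : ℕ → ℝ) (Rk : ℕ → Mat n),
      (∀ k, 0 ≤ tk k ∧ Rk k ∈ P (tk k)) ∧ Tendsto tk atTop atTop ∧
      Tendsto (fun k => (μ ^ tk k)⁻¹ • Rk k) atTop (nhds R)}
    IsCompact Rinf ∧
    (∀ R ∈ Rinf, ∀ Q ∈ Rinf, Q ∘L R ∈ Rinf) ∧
    (∀ t : ℝ, 0 ≤ t → ∀ T ∈ P t, ∀ Q ∈ Rinf,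
      (μ ^ t)⁻¹ • (T ∘L Q) ∈ Rinf ∧ (μ ^ t)⁻¹ • (Q ∘L T) ∈ Rinf) :=
  stmt7_general n P μ Cqe hμ hconc hqe
end
end

section
/- Extremal norm construction: let R_∞ ⊂ M_n(ℝ) be a compact irreducible semigroup containing a nonzero element, satisfying μ^{-t}TS ∈ R_∞ and μ^{-t}ST ∈ R_∞ for every T ∈ Φ(F_t) and S ∈ R_∞. Then v̂(x) := max_{R∈R_∞} ‖Rx‖ defines a norm on ℝⁿ, and the induced operator norm satisfies ‖T‖_{v̂} ≤ μ^t for every t ≥ 0 and T ∈ Φ(F_t). -/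
/-!
The supremum `v̂(x) = sup_{R ∈ R_∞} ‖R x‖` is finite because `R_∞` is bounded, and it is a
seminorm because each `x ↦ ‖R x‖` is one. It is definite by irreducibility: the common kernel of
`R_∞` is an invariant subspace, and it is not everything since `R_∞ ≠ {0}`. Extremality holds
because `μ^{-t} (R ∘ T) ∈ R_∞`, so `‖R (T x)‖ = μ^t ‖(μ^{-t} (R ∘ T)) x‖ ≤ μ^t v̂(x)`.
-/

open Filter Set
open scoped Topology

noncomputable section

namespace ExtremalNorm

open scoped Pointwise

variable {𝕜 E F : Type*} [NontriviallyNormedField 𝕜]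
  [NormedAddCommGroup E] [NormedSpace 𝕜 E] [NormedAddCommGroup F] [NormedSpace 𝕜 F]

def extremalNorm (S : Set (E →L[𝕜] F)) (x : E) : ℝ :=
  sSup {r : ℝ | ∃ R ∈ S, r = ‖R x‖}

variable {S : Set (E →L[𝕜] F)}

theorem bddAbove_norm_apply (hS : Bornology.IsBounded S) (x : E) :
    BddAbove {r : ℝ | ∃ R ∈ S, r = ‖R x‖} := by
  obtain ⟨C, hC⟩ := hS.exists_norm_le
  refine ⟨C * ‖x‖, ?_⟩
  rintro r ⟨R, hR, rfl⟩
  exact R.le_of_opNorm_le (hC R hR) x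

theorem norm_apply_le_extremalNorm (hS : Bornology.IsBounded S) {R : E →L[𝕜] F} (hR : R ∈ S)
    (x : E) : ‖R x‖ ≤ extremalNorm S x :=
  le_csSup (bddAbove_norm_apply hS x) ⟨R, hR, rfl⟩

theorem extremalNorm_le {x : E} {a : ℝ} (ha : 0 ≤ a) (h : ∀ R ∈ S, ‖R x‖ ≤ a) :
    extremalNorm S x ≤ a :=
  Real.sSup_le (by rintro r ⟨R, hR, rfl⟩; exact h R hR) ha

theorem extremalNorm_nonneg (x : E) : 0 ≤ extremalNorm S x :=
  Real.sSup_nonneg (by rintro r ⟨R, -, rfl⟩; exact norm_nonneg _)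

theorem extremalNorm_smul (c : 𝕜) (x : E) :
    extremalNorm S (c • x) = ‖c‖ * extremalNorm S x := by
  have hset : {r : ℝ | ∃ R ∈ S, r = ‖R (c • x)‖} = ‖c‖ • {r : ℝ | ∃ R ∈ S, r = ‖R x‖} := by
    ext r
    simp only [map_smul, norm_smul, Set.mem_smul_set, Set.mem_ofPred_eq, smul_eq_mul]
    constructor
    · rintro ⟨R, hR, rfl⟩
      exact ⟨_, ⟨R, hR, rfl⟩, rfl⟩
    · rintro ⟨_, ⟨R, hR, rfl⟩, rfl⟩
      exact ⟨R, hR, rfl⟩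
  rw [extremalNorm, hset, Real.sSup_smul_of_nonneg (norm_nonneg c)]
  rfl

theorem extremalNorm_zero : extremalNorm S 0 = 0 := by
  simpa using extremalNorm_smul (S := S) 0 0

theorem extremalNorm_add_le (hS : Bornology.IsBounded S) (x y : E) :
    extremalNorm S (x + y) ≤ extremalNorm S x + extremalNorm S y :=
  extremalNorm_le (add_nonneg (extremalNorm_nonneg x) (extremalNorm_nonneg y)) fun R hR =>
    calc ‖R (x + y)‖ ≤ ‖R x‖ + ‖R y‖ := by rw [map_add]; exact norm_add_le _ _
      _ ≤ extremalNorm S x + extremalNorm S y :=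
        add_le_add (norm_apply_le_extremalNorm hS hR x) (norm_apply_le_extremalNorm hS hR y)

theorem eq_zero_of_forall_apply_eq_zero {S : Set (E →L[𝕜] E)} (hne : ∃ R ∈ S, R ≠ 0)
    (hirr : ∀ V : Submodule 𝕜 E, (∀ R ∈ S, ∀ x ∈ V, R x ∈ V) → V = ⊥ ∨ V = ⊤)
    {x : E} (hx : ∀ R ∈ S, R x = 0) : x = 0 := by
  let K : Submodule 𝕜 E := ⨅ R ∈ S, LinearMap.ker (R : E →ₗ[𝕜] E)
  have mem_K : ∀ y, y ∈ K ↔ ∀ R ∈ S, R y = 0 := by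
    intro y
    simp only [K, Submodule.mem_iInf, LinearMap.mem_ker, ContinuousLinearMap.coe_coe]
  have hK : ∀ R ∈ S, ∀ y ∈ K, R y ∈ K := by
    intro R hR y hy
    rw [mem_K] at hy ⊢
    intro Q _
    rw [hy R hR, map_zero]
  rcases hirr K hK with hbot | htop
  · simpa [hbot] using (mem_K x).mpr hx
  · obtain ⟨R₀, hR₀, hR₀_ne⟩ := hne
    refine absurd (ContinuousLinearMap.ext fun y => ?_) hR₀_ne
    exact (mem_K y).mp (htop ▸ Submodule.mem_top) R₀ hR₀

theorem extremalNorm_eq_zero_iff {S : Set (E →L[𝕜] E)} (hS : Bornology.IsBounded S)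
    (hne : ∃ R ∈ S, R ≠ 0)
    (hirr : ∀ V : Submodule 𝕜 E, (∀ R ∈ S, ∀ x ∈ V, R x ∈ V) → V = ⊥ ∨ V = ⊤) (x : E) :
    extremalNorm S x = 0 ↔ x = 0 := by
  refine ⟨fun hx => eq_zero_of_forall_apply_eq_zero hne hirr fun R hR => ?_,
    fun hx => hx ▸ extremalNorm_zero⟩
  exact norm_le_zero_iff.mp (hx ▸ norm_apply_le_extremalNorm hS hR x)

theorem extremalNorm_apply_le {S : Set (E →L[𝕜] E)} (hS : Bornology.IsBounded S) {a : 𝕜}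
    (ha : a ≠ 0) {T : E →L[𝕜] E} (hT : ∀ Q ∈ S, a⁻¹ • (Q ∘L T) ∈ S) (x : E) :
    extremalNorm S (T x) ≤ ‖a‖ * extremalNorm S x := by
  refine extremalNorm_le (mul_nonneg (norm_nonneg a) (extremalNorm_nonneg x)) fun Q hQ => ?_
  calc ‖Q (T x)‖ = ‖a‖ * ‖(a⁻¹ • (Q ∘L T)) x‖ := by
        rw [smul_apply, ContinuousLinearMap.comp_apply, norm_smul, norm_inv,
          mul_inv_cancel_left₀ (norm_ne_zero_iff.mpr ha)]
    _ ≤ ‖a‖ * extremalNorm S x :=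
        mul_le_mul_of_nonneg_left (norm_apply_le_extremalNorm hS (hT Q hQ) x) (norm_nonneg a)

end ExtremalNorm

open ExtremalNorm in
theorem stmt8_general (n : ℕ) (P : ℝ → Set (Mat n)) (Rinf : Set (Mat n)) (μ : ℝ) (hμ : 0 < μ)
    (hcomp : IsCompact Rinf)
    (hne : ∃ R ∈ Rinf, R ≠ 0)
    (hirr : ∀ V : Submodule ℝ (Euc n),
      (∀ R ∈ Rinf, ∀ x ∈ V, R x ∈ V) → V = ⊥ ∨ V = ⊤)
    (hidealL : ∀ t : ℝ, 0 ≤ t → ∀ T ∈ P t, ∀ Q ∈ Rinf, (μ ^ t)⁻¹ • (Q ∘L T) ∈ Rinf) :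
    let v : Euc n → ℝ := fun x => sSup {r : ℝ | ∃ R ∈ Rinf, r = ‖R x‖}
    (∀ x, 0 ≤ v x) ∧
    (∀ x, v x = 0 ↔ x = 0) ∧
    (∀ (c : ℝ) (x : Euc n), v (c • x) = |c| * v x) ∧
    (∀ x y : Euc n, v (x + y) ≤ v x + v y) ∧
    (∀ t : ℝ, 0 ≤ t → ∀ T ∈ P t, ∀ x : Euc n, v (T x) ≤ μ ^ t * v x) := by
  have hbdd := hcomp.isBounded
  refine ⟨extremalNorm_nonneg, extremalNorm_eq_zero_iff hbdd hne hirr, fun c x => ?_,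
    extremalNorm_add_le hbdd, fun t ht T hT x => ?_⟩
  · have h := extremalNorm_smul (S := Rinf) c x
    rwa [Real.norm_eq_abs] at h
  · have hμt : 0 < μ ^ t := Real.rpow_pos_of_pos hμ t
    have h := extremalNorm_apply_le hbdd hμt.ne' (hidealL t ht T hT) x
    rwa [Real.norm_of_nonneg hμt.le] at h

/-- Extremal norm construction: if `R_∞` is a compact irreducible semigroup
of matrices containing a nonzero element and satisfying the ideal property
`μ^{-t} S T ∈ R_∞` for `T ∈ P t = Φ(F_t)`, `S ∈ R_∞`, then
`v̂(x) := sup_{R ∈ R_∞} ‖R x‖` is a norm on `ℝⁿ` and the induced operator norm satisfies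
`‖T‖_{v̂} ≤ μ^t` for every `t ≥ 0` and `T ∈ P t`, i.e. `v̂(T x) ≤ μ^t v̂(x)` for all `x`. -/
theorem stmt8 (n : ℕ) (P : ℝ → Set (Mat n)) (Rinf : Set (Mat n)) (μ : ℝ) (hμ : 0 < μ)
    (hcomp : IsCompact Rinf)
    (hne : ∃ R ∈ Rinf, R ≠ 0)
    (hirr : ∀ V : Submodule ℝ (Euc n),
      (∀ R ∈ Rinf, ∀ x ∈ V, R x ∈ V) → V = ⊥ ∨ V = ⊤)
    (hsemi : ∀ R ∈ Rinf, ∀ Q ∈ Rinf, Q ∘L R ∈ Rinf)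
    (hidealL : ∀ t : ℝ, 0 ≤ t → ∀ T ∈ P t, ∀ Q ∈ Rinf, (μ ^ t)⁻¹ • (Q ∘L T) ∈ Rinf)
    (hidealR : ∀ t : ℝ, 0 ≤ t → ∀ T ∈ P t, ∀ Q ∈ Rinf, (μ ^ t)⁻¹ • (T ∘L Q) ∈ Rinf) :
    let v : Euc n → ℝ := fun x => sSup {r : ℝ | ∃ R ∈ Rinf, r = ‖R x‖}
    (∀ x, 0 ≤ v x) ∧
    (∀ x, v x = 0 ↔ x = 0) ∧
    (∀ (c : ℝ) (x : Euc n), v (c • x) = |c| * v x) ∧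
    (∀ x y : Euc n, v (x + y) ≤ v x + v y) ∧
    (∀ t : ℝ, 0 ≤ t → ∀ T ∈ P t, ∀ x : Euc n, v (T x) ≤ μ ^ t * v x) :=
  stmt8_general n P Rinf μ hμ hcomp hne hirr hidealL
end
end

section
/- The reachable set of a switched linear control system under arbitrary switching with a finite set of modes {(A_i, B_i)}_{i=1}^k is contained in V, where V = Σ_{j≥1} V_j, V₁ = D₁ + ⋯ + D_k with D_i = Im[B_i, A_iB_i, …, A_i^{n-1}B_i], and V_{j+1} = Γ_{A_1}V_j + ⋯ + Γ_{A_k}V_j with Γ_A W = W + AW + ⋯ + A^{n-1}W. Equivalently, V is the smallest subspace containing all Im B_i and invariant under all A_i, and every point reachable from 0 by a piecewise constant switching law and measurable control lies in V. -/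
/-
By Cayley–Hamilton, `A^p` is a combination of the `A^j` with `j < n`, so `V = ⨆ j, Vj j` is
invariant under every `A_i`; it contains every `Im B_i` and lies in every such subspace, hence it is
the smallest one. For reachability let `P` be the orthogonal projection onto `Vᗮ`. Invariance of
`V` gives `P (A z) = P (A (P z))` and `P (B u) = 0`, so `y = P ∘ x` satisfies
`‖y t‖ ≤ C ∫₀ᵗ ‖y‖`; iterating this inequality from a bound `M` of `‖y‖` on `[0, t]` gives
`‖y t‖ ≤ M (C t)^N / N! → 0`.
-/

open Filter MeasureTheory Set
open scoped Topology

noncomputable section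

/-- The recursively defined subspaces `V_j` of the reachability construction:
`V₁ = D₁ + ⋯ + D_k` with `D_i = Im[B_i, A_iB_i, …, A_i^{n-1}B_i]`, and
`V_{j+1} = Γ_{A_1}V_j + ⋯ + Γ_{A_k}V_j` with `Γ_A W = W + AW + ⋯ + A^{n-1}W`. -/
def Vj (n m k : ℕ) (A : Fin k → Mat n) (B : Fin k → (Euc m →L[ℝ] Euc n)) :
    ℕ → Submodule ℝ (Euc n)
  | 0 => Submodule.span ℝ
      {v : Euc n | ∃ i : Fin k, ∃ j < n, ∃ w : Euc m, v = (A i ^ j) (B i w)}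
  | (j + 1) => Submodule.span ℝ
      {v : Euc n | ∃ i : Fin k, ∃ jj < n, ∃ w ∈ Vj n m k A B j, v = (A i ^ jj) w}

open Polynomial
open scoped Nat

theorem Module.End.pow_apply_mem_of_forall_lt_finrank {K M : Type*} [Field K] [AddCommGroup M]
    [Module K M] [FiniteDimensional K M] (f : Module.End K M) {W : Submodule K M} {z : M}
    (h : ∀ j < Module.finrank K M, (f ^ j) z ∈ W) (p : ℕ) : (f ^ p) z ∈ W := by
  have hdeg : (X ^ p %ₘ f.charpoly).degree < Module.finrank K M := by
    rw [← f.charpoly_natDegree, ← degree_eq_natDegree f.charpoly_monic.ne_zero]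
    exact degree_modByMonic_lt _ f.charpoly_monic
  rw [LinearMap.pow_eq_aeval_mod_charpoly, aeval_eq_sum_range, LinearMap.sum_apply]
  refine W.sum_mem fun j _ => ?_
  rw [LinearMap.smul_apply]
  by_cases hj : j < Module.finrank K M
  · exact W.smul_mem _ (h j hj)
  · rw [coeff_eq_zero_of_degree_lt (hdeg.trans_le (by exact_mod_cast not_lt.mp hj)), zero_smul]
    exact W.zero_mem

theorem Mat.pow_apply_mem_of_forall_lt {n : ℕ} (f : Mat n) {W : Submodule ℝ (Euc n)} {z : Euc n}
    (h : ∀ j < n, (f ^ j) z ∈ W) (p : ℕ) : (f ^ p) z ∈ W := by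
  simpa [← ContinuousLinearMap.toLinearMap_pow] using
    Module.End.pow_apply_mem_of_forall_lt_finrank (f : Module.End ℝ (Euc n)) (W := W) (z := z)
      (by simpa [← ContinuousLinearMap.toLinearMap_pow] using h) p

theorem intervalIntegral_mul_pow_div_factorial (C M r : ℝ) (N : ℕ) :
    ∫ s in (0 : ℝ)..r, C * (M * (C * s) ^ N / N !) = M * (C * r) ^ (N + 1) / (N + 1)! := by
  simp_rw [mul_pow, mul_div_assoc, ← mul_assoc, mul_div_assoc']
  rw [intervalIntegral.integral_div, intervalIntegral.integral_const_mul, integral_pow,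
    Nat.factorial_succ]
  push_cast
  field_simp
  ring

theorem le_zero_of_le_mul_intervalIntegral {g : ℝ → ℝ} {C T : ℝ} (hC : 0 ≤ C)
    (hg : ContinuousOn g (Icc 0 T)) (hle : ∀ r ∈ Icc 0 T, g r ≤ C * ∫ s in (0 : ℝ)..r, g s) :
    ∀ r ∈ Icc 0 T, g r ≤ 0 := by
  obtain ⟨M, hM⟩ := isCompact_Icc.exists_bound_of_continuousOn hg
  have hbound : ∀ N : ℕ, ∀ r ∈ Icc 0 T, g r ≤ M * (C * r) ^ N / N ! := by
    intro N
    induction N with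
    | zero => intro r hr; simpa using (le_abs_self _).trans (hM r hr)
    | succ N ih =>
      intro r hr
      calc g r ≤ C * ∫ s in (0 : ℝ)..r, g s := hle r hr
        _ ≤ C * ∫ s in (0 : ℝ)..r, M * (C * s) ^ N / N ! := by
          gcongr
          refine intervalIntegral.integral_mono_on hr.1 ?_ ?_
            fun s hs => ih s ⟨hs.1, hs.2.trans hr.2⟩
          · exact (hg.mono (Icc_subset_Icc le_rfl hr.2)).intervalIntegrable_of_Icc hr.1
          · exact (by fun_prop : Continuous _).intervalIntegrable _ _
        _ = M * (C * r) ^ (N + 1) / (N + 1)! := by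
          rw [← intervalIntegral.integral_const_mul, intervalIntegral_mul_pow_div_factorial]
  intro r hr
  have hlim : Tendsto (fun N : ℕ => M * (C * r) ^ N / N !) atTop (𝓝 0) := by
    simpa [mul_div_assoc] using (FloorSemiring.tendsto_pow_div_factorial_atTop (C * r)).const_mul M
  exact ge_of_tendsto' hlim fun N => hbound N r hr

section InnerProductSpace

variable {E : Type*} [NormedAddCommGroup E] [InnerProductSpace ℝ E] (V : Submodule ℝ E)
  [V.HasOrthogonalProjection]

theorem Submodule.starProjection_orthogonal_apply_eq_zero_iff {v : E} :
    Vᗮ.starProjection v = 0 ↔ v ∈ V := by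
  rw [starProjection_apply_eq_zero_iff, orthogonal_orthogonal]

theorem Submodule.norm_starProjection_orthogonal_apply_le {a : E →L[ℝ] E}
    (ha : ∀ z ∈ V, a z ∈ V) (z : E) :
    ‖Vᗮ.starProjection (a z)‖ ≤ ‖a‖ * ‖Vᗮ.starProjection z‖ := by
  have hsplit : a z = a (Vᗮ.starProjection z) + a (z - Vᗮ.starProjection z) := by
    rw [← map_add, add_sub_cancel]
  have hV : z - Vᗮ.starProjection z ∈ V := by
    simpa only [orthogonal_orthogonal] using Vᗮ.sub_starProjection_mem_orthogonal z
  rw [hsplit, map_add, (V.starProjection_orthogonal_apply_eq_zero_iff).mpr (ha _ hV), add_zero]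
  exact (Vᗮ.norm_starProjection_apply_le _).trans (a.le_opNorm _)

variable [CompleteSpace E]

theorem mem_of_eq_intervalIntegral_of_invariant {a : ℝ → E →L[ℝ] E} {b x : ℝ → E} {C : ℝ}
    (ha : ∀ s, ‖a s‖ ≤ C) (haV : ∀ s, ∀ z ∈ V, a s z ∈ V) (hb : ∀ s, b s ∈ V)
    (hx : ∀ t, 0 ≤ t → x t = ∫ s in (0 : ℝ)..t, (a s (x s) + b s))
    (hint : ∀ t, 0 < t → IntervalIntegrable (fun s => a s (x s) + b s) volume 0 t)
    {t : ℝ} (ht : 0 ≤ t) : x t ∈ V := by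
  set P := Vᗮ.starProjection
  have hint' : ∀ r, 0 ≤ r → IntervalIntegrable (fun s => a s (x s) + b s) volume 0 r := by
    intro r hr
    rcases hr.eq_or_lt with rfl | hr
    · exact .refl
    · exact hint r hr
  have hxc : ContinuousOn x (Icc 0 t) := by
    have := intervalIntegral.continuousOn_primitive_interval' (hint' t ht) left_mem_uIcc
    rw [uIcc_of_le ht] at this
    exact this.congr fun r hr => hx r hr.1
  have hPx : ∀ r ∈ Icc 0 t, ‖P (x r)‖ ≤ C * ∫ s in (0 : ℝ)..r, ‖P (x s)‖ := by
    intro r hr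
    rw [hx r hr.1, ← P.intervalIntegral_comp_comm (hint' r hr.1),
      ← intervalIntegral.integral_const_mul]
    refine intervalIntegral.norm_integral_le_of_norm_le hr.1 (.of_forall fun s _ => ?_) ?_
    · rw [map_add, (V.starProjection_orthogonal_apply_eq_zero_iff).mpr (hb s), add_zero]
      exact (V.norm_starProjection_orthogonal_apply_le (haV s) _).trans
        (mul_le_mul_of_nonneg_right (ha s) (norm_nonneg _))
    · refine ContinuousOn.intervalIntegrable_of_Icc hr.1 ?_
      exact continuousOn_const.mul ((P.continuous.comp_continuousOn hxc).norm.mono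
        (Icc_subset_Icc le_rfl hr.2))
  have hC : 0 ≤ C := (norm_nonneg _).trans (ha 0)
  have hPxt := le_zero_of_le_mul_intervalIntegral hC
    (P.continuous.comp_continuousOn hxc).norm hPx t ⟨ht, le_rfl⟩
  exact (V.starProjection_orthogonal_apply_eq_zero_iff).mp (norm_le_zero_iff.mp hPxt)

end InnerProductSpace

section Reachability

variable {n m k : ℕ} (A : Fin k → Mat n) (B : Fin k → (Euc m →L[ℝ] Euc n))

theorem apply_mem_Vj_zero (i : Fin k) (v : Euc m) : B i v ∈ Vj n m k A B 0 := by
  simpa using Mat.pow_apply_mem_of_forall_lt (A i) (W := Vj n m k A B 0)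
    (fun j hj => Submodule.subset_span ⟨i, j, hj, v, rfl⟩) 0

theorem apply_mem_Vj_succ {j : ℕ} {z : Euc n} (hz : z ∈ Vj n m k A B j) (i : Fin k) :
    A i z ∈ Vj n m k A B (j + 1) := by
  simpa using Mat.pow_apply_mem_of_forall_lt (A i) (W := Vj n m k A B (j + 1))
    (fun jj hjj => Submodule.subset_span ⟨i, jj, hjj, z, hz, rfl⟩) 1

theorem apply_mem_iSup_Vj {z : Euc n} (hz : z ∈ ⨆ j, Vj n m k A B j) (i : Fin k) :
    A i z ∈ ⨆ j, Vj n m k A B j := by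
  refine Submodule.iSup_induction _ (motive := fun z => A i z ∈ ⨆ j, Vj n m k A B j) hz
    (fun j z hz => Submodule.mem_iSup_of_mem (j + 1) (apply_mem_Vj_succ A B hz i)) ?_ ?_
  · simp
  · intro z₁ z₂ h₁ h₂
    simpa using Submodule.add_mem _ h₁ h₂

theorem Vj_le_of_invariant {W : Submodule ℝ (Euc n)} (hB : ∀ i, ∀ v : Euc m, B i v ∈ W)
    (hA : ∀ i, ∀ z ∈ W, A i z ∈ W) (j : ℕ) : Vj n m k A B j ≤ W := by
  have hpow : ∀ i p, ∀ z ∈ W, (A i ^ p) z ∈ W := fun i p z hz => by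
    simpa [← ContinuousLinearMap.toLinearMap_pow] using
      Module.End.pow_apply_mem_of_forall_mem (f' := (A i : Module.End ℝ (Euc n))) p (hA i) z hz
  induction j with
  | zero =>
    refine Submodule.span_le.mpr ?_
    rintro _ ⟨i, p, -, v, rfl⟩
    exact hpow i p _ (hB i v)
  | succ j ih =>
    refine Submodule.span_le.mpr ?_
    rintro _ ⟨i, p, -, z, hz, rfl⟩
    exact hpow i p z (ih hz)

theorem iSup_Vj_eq_sInf :
    (⨆ j, Vj n m k A B j) = sInf {W : Submodule ℝ (Euc n) |
      (∀ i, ∀ v : Euc m, B i v ∈ W) ∧ (∀ i, ∀ z ∈ W, A i z ∈ W)} :=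
  le_antisymm (le_sInf fun _ ⟨hB, hA⟩ => iSup_le (Vj_le_of_invariant A B hB hA))
    (sInf_le ⟨fun i v => Submodule.mem_iSup_of_mem 0 (apply_mem_Vj_zero A B i v),
      fun i _ hz => apply_mem_iSup_Vj A B hz i⟩)

end Reachability

/-- The reachable set from the origin of the switched linear control system
`ẋ = A_{σ(t)} x + B_{σ(t)} u` (with `k` modes, switching signal `σ` and locally integrable
control `u`, in Carathéodory integral form) is contained in `V = Σ_{j≥1} V_j`; moreover `V`
coincides with the smallest subspace containing all `Im B_i` and invariant under all `A_i`. -/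
theorem stmt13 (n m k : ℕ) (A : Fin k → Mat n) (B : Fin k → (Euc m →L[ℝ] Euc n))
    (σ : ℝ → Fin k) (u : ℝ → Euc m) (x : ℝ → Euc n)
    (hx : ∀ t : ℝ, x t = ∫ s in (0 : ℝ)..t, (A (σ s) (x s) + B (σ s) (u s)))
    (hint : ∀ t : ℝ, 0 < t →
      IntervalIntegrable (fun s => A (σ s) (x s) + B (σ s) (u s)) volume 0 t) :
    (⨆ j, Vj n m k A B j)
        = sInf {W : Submodule ℝ (Euc n) |
            (∀ i, ∀ v : Euc m, B i v ∈ W) ∧ (∀ i, ∀ z ∈ W, A i z ∈ W)} ∧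
    ∀ t : ℝ, 0 ≤ t → x t ∈ ⨆ j, Vj n m k A B j := by
  refine ⟨iSup_Vj_eq_sInf A B, fun t ht => ?_⟩
  have hAσ : ∀ s, ‖A (σ s)‖ ≤ ∑ i, ‖A i‖ := fun s =>
    Finset.single_le_sum (fun i _ => norm_nonneg (A i)) (Finset.mem_univ (σ s))
  exact mem_of_eq_intervalIntegral_of_invariant (⨆ j, Vj n m k A B j) hAσ
    (fun s _ hz => apply_mem_iSup_Vj A B hz (σ s))
    (fun s => Submodule.mem_iSup_of_mem 0 (apply_mem_Vj_zero A B (σ s) (u s)))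
    (fun t _ => hx t) hint ht
end
end
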